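/- Let (B, 𝔼, 𝔰) be an extriangulated category with enough projectives and injectives and ((S,T),(U,V)) a twin cotorsion pair with T = U (so W = T and the heart is H̄ = B/[W]). For every object X of B there exists a conflation Z ↣ Y ↠ X with Y ∈ CoCone(S,S), Z ∈ W, and such that the image of the deflation Y ↠ X in H̄ is a regular morphism (both monic and epic). -/

import Mathlib

open CategoryTheory Category Limits Opposite ZeroObject

universe v u

namespace ExtStmt

variable (B : Type u) [Category.{v} B] [Preadditive B] [HasZeroObject B] [HasBinaryBiproducts B]

/-- An extriangulated category structure on an additive category `B`,
following Nakaoka–Palu. `E` is the biadditive extension bifunctor, and `Real δ X a b`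
expresses that the sequence `A ⟶ X ⟶ C` (given by `a`, `b`) belongs to the equivalence
class `𝔰(δ)`, i.e. realizes the extension `δ ∈ 𝔼(C, A)`. -/
structure Extriangulated where
  /-- The extension bifunctor `𝔼 : Bᵒᵖ × B ⥤ Ab`. -/
  E : Bᵒᵖ ⥤ B ⥤ AddCommGrpCat.{v}
  /-- `𝔼(C, -)` is additive. -/
  addE₁ : ∀ C : Bᵒᵖ, (E.obj C).Additive
  /-- `𝔼(-, A)` is additive. -/
  addE₂ : ∀ A : B, (E.flip.obj A).Additive
  /-- The realization: `Real δ X a b` means `A ⟶ X ⟶ C` realizes `δ ∈ 𝔼(C, A)`. -/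
  Real : ∀ {A C : B}, ((E.obj (op C)).obj A) → ∀ (X : B), (A ⟶ X) → (X ⟶ C) → Prop
  /-- Every extension is realized by some sequence. -/
  real_ex : ∀ {A C : B} (δ : (E.obj (op C)).obj A),
    ∃ (X : B) (a : A ⟶ X) (b : X ⟶ C), Real δ X a b
  /-- `𝔰(δ)` is closed under the equivalence of sequences. -/
  real_iso : ∀ {A C X X' : B} (δ : (E.obj (op C)).obj A) (a : A ⟶ X) (b : X ⟶ C) (i : X ≅ X'),
    Real δ X a b → Real δ X' (a ≫ i.hom) (i.inv ≫ b)
  /-- Any two realizations of `δ` are equivalent sequences. -/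
  real_unique : ∀ {A C X X' : B} (δ : (E.obj (op C)).obj A) (a : A ⟶ X) (b : X ⟶ C)
    (a' : A ⟶ X') (b' : X' ⟶ C), Real δ X a b → Real δ X' a' b' →
    ∃ i : X ≅ X', a ≫ i.hom = a' ∧ i.hom ≫ b' = b
  /-- Realization of morphisms of extensions: if `f_*δ = h^*δ'` then the pair `(f, h)` is
  realized by some `(f, g, h)`. -/
  real_mor : ∀ {A C A' C' X X' : B} (δ : (E.obj (op C)).obj A) (δ' : (E.obj (op C')).obj A')
    (f : A ⟶ A') (h : C ⟶ C') (a : A ⟶ X) (b : X ⟶ C) (a' : A' ⟶ X') (b' : X' ⟶ C'),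
    Real δ X a b → Real δ' X' a' b' →
    ((E.obj (op C)).map f) δ = ((E.map h.op).app A') δ' →
    ∃ g : X ⟶ X', a ≫ g = f ≫ a' ∧ g ≫ b' = b ≫ h
  /-- Additivity of the realization: `0` is realized by the split sequence. -/
  real_zero : ∀ (A C : B),
    Real (0 : (E.obj (op C)).obj A) (A ⊞ C) biprod.inl biprod.snd
  /-- Additivity of the realization: direct sums. -/
  real_sum : ∀ {A C A' C' X X' : B} (δ : (E.obj (op C)).obj A) (δ' : (E.obj (op C')).obj A')
    (a : A ⟶ X) (b : X ⟶ C) (a' : A' ⟶ X') (b' : X' ⟶ C'),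
    Real δ X a b → Real δ' X' a' b' →
    Real (((E.map (biprod.fst : C ⊞ C' ⟶ C).op).app (A ⊞ A'))
            (((E.obj (op C)).map (biprod.inl : A ⟶ A ⊞ A')) δ)
          + ((E.map (biprod.snd : C ⊞ C' ⟶ C').op).app (A ⊞ A'))
            (((E.obj (op C')).map (biprod.inr : A' ⟶ A ⊞ A')) δ'))
      (X ⊞ X') (biprod.map a a') (biprod.map b b')
  /-- Axiom (ET3). -/
  et3 : ∀ {A C A' C' X X' : B} (δ : (E.obj (op C)).obj A) (δ' : (E.obj (op C')).obj A')
    (a : A ⟶ X) (b : X ⟶ C) (a' : A' ⟶ X') (b' : X' ⟶ C') (f : A ⟶ A') (g : X ⟶ X'),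
    Real δ X a b → Real δ' X' a' b' → a ≫ g = f ≫ a' →
    ∃ h : C ⟶ C', g ≫ b' = b ≫ h ∧ ((E.obj (op C)).map f) δ = ((E.map h.op).app A') δ'
  /-- Axiom (ET3ᵒᵖ). -/
  et3op : ∀ {A C A' C' X X' : B} (δ : (E.obj (op C)).obj A) (δ' : (E.obj (op C')).obj A')
    (a : A ⟶ X) (b : X ⟶ C) (a' : A' ⟶ X') (b' : X' ⟶ C') (g : X ⟶ X') (h : C ⟶ C'),
    Real δ X a b → Real δ' X' a' b' → g ≫ b' = b ≫ h →
    ∃ f : A ⟶ A', a ≫ g = f ≫ a' ∧ ((E.obj (op C)).map f) δ = ((E.map h.op).app A') δ'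
  /-- Axiom (ET4). -/
  et4 : ∀ {A B₀ D C₀ F : B} (δ : (E.obj (op D)).obj A) (δ' : (E.obj (op F)).obj B₀)
    (a : A ⟶ B₀) (a' : B₀ ⟶ D) (bb : B₀ ⟶ C₀) (b' : C₀ ⟶ F),
    Real δ B₀ a a' → Real δ' C₀ bb b' →
    ∃ (E₀ : B) (c' : C₀ ⟶ E₀) (δ'' : (E.obj (op E₀)).obj A) (d : D ⟶ E₀) (e : E₀ ⟶ F),
      Real δ'' C₀ (a ≫ bb) c' ∧
      Real (((E.obj (op F)).map a') δ') E₀ d e ∧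
      a' ≫ d = bb ≫ c' ∧ c' ≫ e = b' ∧
      ((E.map d.op).app A) δ'' = δ ∧
      ((E.obj (op E₀)).map a) δ'' = ((E.map e.op).app B₀) δ'
  /-- Axiom (ET4ᵒᵖ). -/
  et4op : ∀ {A C₀ E₀ D F : B} (δ'' : (E.obj (op E₀)).obj A) (θ : (E.obj (op F)).obj D)
    (c : A ⟶ C₀) (c' : C₀ ⟶ E₀) (d : D ⟶ E₀) (e : E₀ ⟶ F),
    Real δ'' C₀ c c' → Real θ E₀ d e →
    ∃ (B₀ : B) (a : A ⟶ B₀) (a' : B₀ ⟶ D) (bb : B₀ ⟶ C₀)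
      (δ : (E.obj (op D)).obj A) (δ' : (E.obj (op F)).obj B₀),
      Real δ B₀ a a' ∧ Real δ' C₀ bb (c' ≫ e) ∧
      a ≫ bb = c ∧ a' ≫ d = bb ≫ c' ∧
      θ = ((E.obj (op F)).map a') δ' ∧
      ((E.map d.op).app A) δ'' = δ ∧
      ((E.obj (op E₀)).map a) δ'' = ((E.map e.op).app B₀) δ'

variable {B}

/-- The group of extensions `𝔼(C, A)`. -/
abbrev Extriangulated.Ext (T : Extriangulated B) (C A : B) : Type v :=
  (T.E.obj (op C)).obj A

/-- `f_*δ`, the pushforward of an extension along `f : A ⟶ A'`. -/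
abbrev Extriangulated.push (T : Extriangulated B) {C A A' : B} (f : A ⟶ A')
    (δ : T.Ext C A) : T.Ext C A' :=
  ((T.E.obj (op C)).map f) δ

/-- `g^*δ`, the pullback of an extension along `g : C ⟶ C'`. -/
abbrev Extriangulated.pull (T : Extriangulated B) {C C' A : B} (g : C ⟶ C')
    (δ : T.Ext C' A) : T.Ext C A :=
  ((T.E.map g.op).app A) δ

/-- A pair of composable morphisms is a conflation if it realizes some extension. -/
def Extriangulated.IsConflation (T : Extriangulated B) {A X C : B}
    (a : A ⟶ X) (b : X ⟶ C) : Prop :=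
  ∃ δ : T.Ext C A, T.Real δ X a b


set_option linter.unusedSectionVars false

section Hearts

variable {B : Type u} [Category.{v} B] [Preadditive B] [HasZeroObject B] [HasBinaryBiproducts B]

def wRel (Wp : B → Prop) (P : B → Prop) : HomRel (ObjectProperty.FullSubcategory P) :=
  fun {X Y} f g =>
    ∃ (Wo : B) (_ : Wp Wo) (p : X.obj ⟶ Wo) (q : Wo ⟶ Y.obj), p ≫ q = f.hom - g.hom

abbrev HeartCat (Wp : B → Prop) (P : B → Prop) := CategoryTheory.Quotient (wRel Wp P)

theorem wRel_congruence (Wp P : B → Prop) (hW0 : Wp (0 : B))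
    (hWbi : ∀ {X Y : B}, Wp X → Wp Y → Wp (X ⊞ Y)) : Congruence (wRel Wp P) where
  equivalence := by
    refine fun {X Y} => ⟨?_, ?_, ?_⟩
    · intro f
      exact ⟨0, hW0, 0, 0, by simp⟩
    · rintro f g ⟨Wo, hw, p, q, h⟩
      exact ⟨Wo, hw, -p, q, by rw [Preadditive.neg_comp, h]; abel⟩
    · rintro f g h ⟨W₁, hw₁, p₁, q₁, h₁⟩ ⟨W₂, hw₂, p₂, q₂, h₂⟩
      exact ⟨W₁ ⊞ W₂, hWbi hw₁ hw₂, biprod.lift p₁ p₂, biprod.desc q₁ q₂, by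
        rw [biprod.lift_desc, h₁, h₂]; abel⟩
  comp_left := by
    rintro X Y Z f g g' ⟨Wo, hw, p, q, h⟩
    exact ⟨Wo, hw, f.hom ≫ p, q, by rw [Category.assoc, h, Preadditive.comp_sub]; rfl⟩
  comp_right := by
    rintro X Y Z f f' g ⟨Wo, hw, p, q, h⟩
    exact ⟨Wo, hw, p, q ≫ g.hom, by rw [← Category.assoc, h, Preadditive.sub_comp]; rfl⟩

theorem wRel_add (Wp P : B → Prop)
    (hWbi : ∀ {X Y : B}, Wp X → Wp Y → Wp (X ⊞ Y)) :
    ∀ ⦃X Y : ObjectProperty.FullSubcategory P⦄ (f₁ f₂ g₁ g₂ : X ⟶ Y) (_ : wRel Wp P f₁ f₂)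
      (_ : wRel Wp P g₁ g₂), wRel Wp P (f₁ + g₁) (f₂ + g₂) := by
  rintro X Y f₁ f₂ g₁ g₂ ⟨W₁, hw₁, p₁, q₁, h₁⟩ ⟨W₂, hw₂, p₂, q₂, h₂⟩
  exact ⟨W₁ ⊞ W₂, hWbi hw₁ hw₂, biprod.lift p₁ p₂, biprod.desc q₁ q₂, by
    rw [biprod.lift_desc, h₁, h₂]; show _ = f₁.hom + g₁.hom - (f₂.hom + g₂.hom); abel⟩

/-- The heart is preadditive. -/
def heartPreadditive (Wp P : B → Prop) (hW0 : Wp (0 : B))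
    (hWbi : ∀ {X Y : B}, Wp X → Wp Y → Wp (X ⊞ Y)) : Preadditive (HeartCat Wp P) :=
  letI := wRel_congruence Wp P hW0 hWbi
  Quotient.preadditive _ (wRel_add Wp P hWbi)

/-- The heart has zero morphisms. -/
def heartZeroMorphisms (Wp P : B → Prop) (hW0 : Wp (0 : B))
    (hWbi : ∀ {X Y : B}, Wp X → Wp Y → Wp (X ⊞ Y)) : HasZeroMorphisms (HeartCat Wp P) :=
  letI := heartPreadditive Wp P hW0 hWbi
  inferInstance

/-- A full additive subcategory closed under direct summands and isomorphisms. -/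
structure IsGoodSubcat (P : B → Prop) : Prop where
  mem_of_iso : ∀ {X Y : B}, (X ≅ Y) → P X → P Y
  zero_mem : P (0 : B)
  biprod_mem : ∀ {X Y : B}, P X → P Y → P (X ⊞ Y)
  summand_mem : ∀ {X Y : B}, P (X ⊞ Y) → P X

/-- `(U, V)` is a cotorsion pair on the extriangulated category `(B, 𝔼, 𝔰)`. -/
structure IsCotorsionPair (T : Extriangulated B) (U V : B → Prop) : Prop where
  subU : IsGoodSubcat U
  subV : IsGoodSubcat V
  ext_vanish : ∀ {u v : B}, U u → V v → ∀ δ : T.Ext u v, δ = 0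
  cone : ∀ X : B, ∃ (v u : B) (f : v ⟶ u) (g : u ⟶ X), V v ∧ U u ∧ T.IsConflation f g
  cocone : ∀ X : B, ∃ (v u : B) (f : X ⟶ v) (g : v ⟶ u), V v ∧ U u ∧ T.IsConflation f g

/-- `((S,Tc),(U,V))` is a twin cotorsion pair: two cotorsion pairs with `𝔼(S, V) = 0`. -/
def IsTwinCotorsionPair (T : Extriangulated B) (S Tc U V : B → Prop) : Prop :=
  IsCotorsionPair T S Tc ∧ IsCotorsionPair T U V ∧
    ∀ {s v : B}, S s → V v → ∀ δ : T.Ext s v, δ = 0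

/-- Projective object of an extriangulated category. -/
def IsProjObj (T : Extriangulated B) (P : B) : Prop :=
  ∀ {A X C : B} (a : A ⟶ X) (b : X ⟶ C), T.IsConflation a b →
    ∀ c : P ⟶ C, ∃ d : P ⟶ X, d ≫ b = c

/-- Injective object of an extriangulated category. -/
def IsInjObj (T : Extriangulated B) (I : B) : Prop :=
  ∀ {A X C : B} (a : A ⟶ X) (b : X ⟶ C), T.IsConflation a b →
    ∀ c : A ⟶ I, ∃ d : X ⟶ I, a ≫ d = c

/-- `B` has enough projectives. -/
def HasEnoughProj (T : Extriangulated B) : Prop :=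
  ∀ C : B, ∃ (A P : B) (f : A ⟶ P) (p : P ⟶ C), IsProjObj T P ∧ T.IsConflation f p

/-- `B` has enough injectives. -/
def HasEnoughInj (T : Extriangulated B) : Prop :=
  ∀ A : B, ∃ (I C : B) (i : A ⟶ I) (p : I ⟶ C), IsInjObj T I ∧ T.IsConflation i p

/-- `W = Tc ∩ U`. -/
def Wpred (Tc U : B → Prop) : B → Prop := fun X => Tc X ∧ U X

/-- `CoCone(P, Q)`: objects `X` with a conflation `X ↣ P' ↠ Q'`, `P' ∈ P`, `Q' ∈ Q`. -/
def CoConeOf (T : Extriangulated B) (P Q : B → Prop) : B → Prop := fun X =>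
  ∃ (p q : B) (f : X ⟶ p) (g : p ⟶ q), P p ∧ Q q ∧ T.IsConflation f g

/-- `Cone(P, Q)`: objects `X` with a conflation `P' ↣ Q' ↠ X`, `P' ∈ P`, `Q' ∈ Q`. -/
def ConeOf (T : Extriangulated B) (P Q : B → Prop) : B → Prop := fun X =>
  ∃ (p q : B) (f : p ⟶ q) (g : q ⟶ X), P p ∧ Q q ∧ T.IsConflation f g

/-- `P * Q`: objects `X` with a conflation `P' ↣ X ↠ Q'`, `P' ∈ P`, `Q' ∈ Q`. -/
def StarOf (T : Extriangulated B) (P Q : B → Prop) : B → Prop := fun X =>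
  ∃ (p q : B) (f : p ⟶ X) (g : X ⟶ q), P p ∧ Q q ∧ T.IsConflation f g

/-- `B⁻ = CoCone(W, S)`. -/
def Bminus (T : Extriangulated B) (S Tc U : B → Prop) : B → Prop :=
  CoConeOf T (Wpred Tc U) S

/-- `B⁺ = Cone(V, W)`. -/
def Bplus (T : Extriangulated B) (Tc U V : B → Prop) : B → Prop :=
  ConeOf T V (Wpred Tc U)

/-- `H = B⁻ ∩ B⁺`, the objects of the heart. -/
def HeartPred (T : Extriangulated B) (S Tc U V : B → Prop) : B → Prop := fun X =>
  Bminus T S Tc U X ∧ Bplus T Tc U V X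

/-- The heart `H̄ = H/[W]` of a twin cotorsion pair. -/
abbrev TwinHeart (T : Extriangulated B) (S Tc U V : B → Prop) :=
  HeartCat (Wpred Tc U) (HeartPred T S Tc U V)

/-- Zero morphisms on the heart of a twin cotorsion pair. -/
def heartZeroOfTwin (T : Extriangulated B) {S Tc U V : B → Prop}
    (h : IsTwinCotorsionPair T S Tc U V) (P : B → Prop) :
    HasZeroMorphisms (HeartCat (Wpred Tc U) P) :=
  heartZeroMorphisms _ _ ⟨h.1.subV.zero_mem, h.2.1.subU.zero_mem⟩
    (fun hx hy => ⟨h.1.subV.biprod_mem hx.1 hy.1, h.2.1.subU.biprod_mem hx.2 hy.2⟩)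

end Hearts



/-!
Take conflations `X ↣ E ↠ S₀` and `Z ↣ S₁ ↠ E` from the cotorsion pair `(S, T)`, with
`E, Z ∈ T` and `S₀, S₁ ∈ S`. (ET4ᵒᵖ) glues them into conflations `Z ↣ Y ↠ X` and
`Y ↣ S₁ ↠ S₀`, so `Y ∈ CoCone(S, S)` and `Z ∈ T = W`.

The deflation `f : Y ↠ X` is epic in `B/[W]`: the extension `θ` of `X ↣ E ↠ S₀` is `f_*δ`,
so if `f ≫ c` factors through `W ⊆ T` then `c_*θ = 0` because `𝔼(S, T) = 0`, and `c` extends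
along `X ↣ E` with `E ∈ W`. It is monic: the extension `κ` of a conflation `V' ↣ U' ↠ Y`
from `(U, V)` vanishes on `Z ∈ U`, hence `κ = f^*φ`; if `m ≫ f` factors through `W ⊆ U` then
`m^*κ = 0` because `𝔼(U, V) = 0`, and `m` lifts along `U' ↠ Y` with `U' ∈ W`.
-/

section

variable {B : Type u} [Category.{v} B] [Preadditive B] [HasZeroObject B] [HasBinaryBiproducts B]

def FactorsThrough (Wp : B → Prop) {X Y : B} (φ : X ⟶ Y) : Prop :=
  ∃ (W : B) (_ : Wp W) (p : X ⟶ W) (q : W ⟶ Y), p ≫ q = φ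

lemma FactorsThrough.mono {Wp Wq : B → Prop} (h : ∀ X, Wp X → Wq X) {X Y : B} {φ : X ⟶ Y} :
    FactorsThrough Wp φ → FactorsThrough Wq φ
  | ⟨W, hW, p, q, hpq⟩ => ⟨W, h W hW, p, q, hpq⟩

lemma wRel_iff {Wp P : B → Prop} {X Y : ObjectProperty.FullSubcategory P} (f g : X ⟶ Y) :
    wRel Wp P f g ↔ FactorsThrough Wp (f.hom - g.hom) :=
  Iff.rfl

namespace Extriangulated

variable (T : Extriangulated B)

lemma push_comp {C A A' A'' : B} (f : A ⟶ A') (g : A' ⟶ A'') (x : T.Ext C A) :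
    T.push (f ≫ g) x = T.push g (T.push f x) := by
  simp only [Extriangulated.push, Functor.map_comp]
  rfl

lemma pull_comp {C C' C'' A : B} (g : C ⟶ C') (p : C' ⟶ C'') (x : T.Ext C'' A) :
    T.pull (g ≫ p) x = T.pull g (T.pull p x) := by
  simp only [Extriangulated.pull, op_comp, Functor.map_comp]
  rfl

lemma push_id {C A : B} (x : T.Ext C A) : T.push (𝟙 A) x = x := by
  simp [Extriangulated.push]

lemma pull_id {C A : B} (x : T.Ext C A) : T.pull (𝟙 C) x = x := by
  simp [Extriangulated.pull]

lemma pull_push {C C' A A' : B} (g : C ⟶ C') (f : A ⟶ A') (x : T.Ext C' A) :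
    T.pull g (T.push f x) = T.push f (T.pull g x) := by
  simp only [Extriangulated.pull, Extriangulated.push]
  exact congr($((T.E.map g.op).naturality f) x)

variable {T}

lemma exists_lift_of_pull_eq_zero {A Y C C' : B} {δ : T.Ext C A} {a : A ⟶ Y} {b : Y ⟶ C}
    (hδ : T.Real δ Y a b) {c : C' ⟶ C} (hc : T.pull c δ = 0) :
    ∃ l : C' ⟶ Y, l ≫ b = c := by
  have hsplit : T.Real (T.pull c δ) (A ⊞ C') biprod.inl biprod.snd := hc ▸ T.real_zero A C'
  obtain ⟨g, -, hg⟩ := T.real_mor _ δ (𝟙 A) c _ _ a b hsplit hδ (T.push_id _)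
  exact ⟨biprod.inr ≫ g, by rw [assoc, hg, biprod.inr_snd_assoc]⟩

lemma exists_extend_of_push_eq_zero {A Y C A' : B} {δ : T.Ext C A} {a : A ⟶ Y} {b : Y ⟶ C}
    (hδ : T.Real δ Y a b) {c : A ⟶ A'} (hc : T.push c δ = 0) :
    ∃ s : Y ⟶ A', a ≫ s = c := by
  have hsplit : T.Real (T.push c δ) (A' ⊞ C) biprod.inl biprod.snd := hc ▸ T.real_zero A' C
  obtain ⟨g, hg, -⟩ := T.real_mor δ _ c (𝟙 C) a b _ _ hδ hsplit (T.pull_id _).symm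
  exact ⟨g ≫ biprod.fst, by rw [reassoc_of% hg, biprod.inl_fst, comp_id]⟩

lemma exists_pull_eq_of_pull_eq_zero {A Y C D : B} {δ : T.Ext C A} {a : A ⟶ Y} {b : Y ⟶ C}
    (hδ : T.Real δ Y a b) (ξ : T.Ext Y D) (hξ : T.pull a ξ = 0) :
    ∃ φ : T.Ext C D, T.pull b φ = ξ := by
  obtain ⟨Q, u, v, hξQ⟩ := T.real_ex ξ
  obtain ⟨K, i, j, k, ε, ε', hε, -, -, -, -, hεξ, hε'ξ⟩ := T.et4op ξ δ u v a b hξQ hδ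
  obtain ⟨e, hie, -⟩ := T.real_unique 0 i j biprod.inl biprod.snd
    ((hεξ.symm.trans hξ) ▸ hε) (T.real_zero D A)
  -- `i` is a split mono since the extension `ε = a^*ξ` it realizes vanishes
  have hsplit : i ≫ e.hom ≫ biprod.fst = 𝟙 D := by rw [← assoc, hie, biprod.inl_fst]
  refine ⟨T.push (e.hom ≫ biprod.fst) ε', ?_⟩
  rw [pull_push, ← show T.push i ξ = T.pull b ε' from hε'ξ, ← push_comp, hsplit, push_id]

end Extriangulated

namespace IsCotorsionPair

variable {T : Extriangulated B} {U V : B → Prop}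

theorem factorsThrough_of_factorsThrough_comp_deflation (hUV : IsCotorsionPair T U V)
    {Z Y X : B} {a : Z ⟶ Y} {f : Y ⟶ X} (haf : T.IsConflation a f) (hZ : U Z)
    {M : B} (m : M ⟶ Y) (hm : FactorsThrough U (m ≫ f)) : FactorsThrough U m := by
  obtain ⟨δ, hδ⟩ := haf
  obtain ⟨W, hW, p, q, hpq⟩ := hm
  obtain ⟨VY, UY, v, u, hVY, hUY, κ, hκ⟩ := hUV.cone Y
  obtain ⟨φ, hφ⟩ := T.exists_pull_eq_of_pull_eq_zero hδ κ (hUV.ext_vanish hZ hVY _)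
  have hmκ : T.pull m κ = 0 := by
    rw [← hφ, ← T.pull_comp, ← hpq, T.pull_comp, hUV.ext_vanish hW hVY (T.pull q φ)]
    exact map_zero _
  obtain ⟨l, hl⟩ := T.exists_lift_of_pull_eq_zero hκ hmκ
  exact ⟨UY, hUY, l, u, hl⟩

theorem factorsThrough_of_factorsThrough_comp_of_push_eq (hUV : IsCotorsionPair T U V)
    {X E C₀ : B} {d : X ⟶ E} {e : E ⟶ C₀} {θ : T.Ext C₀ X} (hθ : T.Real θ E d e) (hE : V E)
    (hC₀ : U C₀) {Y : B} {f : Y ⟶ X} {δ : T.Ext C₀ Y} (hθδ : θ = T.push f δ)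
    {M : B} (c : X ⟶ M) (hc : FactorsThrough V (f ≫ c)) : FactorsThrough V c := by
  obtain ⟨W, hW, p, q, hpq⟩ := hc
  have hcθ : T.push c θ = 0 := by
    rw [hθδ, ← T.push_comp, ← hpq, T.push_comp, hUV.ext_vanish hC₀ hW (T.push p δ)]
    exact map_zero _
  obtain ⟨s, hs⟩ := T.exists_extend_of_push_eq_zero hθ hcθ
  exact ⟨E, hE, d, s, hs⟩

theorem exists_conflation_coCone (hUV : IsCotorsionPair T U V) (X : B) :
    ∃ (Z Y : B) (g : Z ⟶ Y) (f : Y ⟶ X), CoConeOf T U U Y ∧ V Z ∧ T.IsConflation g f ∧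
      ∀ {M : B} (c : X ⟶ M), FactorsThrough V (f ≫ c) → FactorsThrough V c := by
  obtain ⟨E, C₀, d, e, hE, hC₀, θ, hθ⟩ := hUV.cocone X
  obtain ⟨Z, C₁, i, p, hZ, hC₁, μ, hμ⟩ := hUV.cone E
  obtain ⟨Y, g, f, j, δ, δ', hδ, hδ', -, -, hθδ', -, -⟩ := T.et4op μ θ i p d e hμ hθ
  exact ⟨Z, Y, g, f, ⟨C₁, C₀, j, p ≫ e, hC₁, hC₀, δ', hδ'⟩, hZ, ⟨δ, hδ⟩,
    hUV.factorsThrough_of_factorsThrough_comp_of_push_eq hθ hE hC₀ hθδ'⟩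

end IsCotorsionPair

variable {Wp P : B → Prop} [Congruence (wRel Wp P)]

lemma mono_functor_map_of_factorsThrough {Y X : ObjectProperty.FullSubcategory P} (f : Y ⟶ X)
    (hf : ∀ {M : B} (m : M ⟶ Y.obj), FactorsThrough Wp (m ≫ f.hom) → FactorsThrough Wp m) :
    Mono ((Quotient.functor (wRel Wp P)).map f) := by
  refine ⟨fun {Z} g₁ g₂ hg => ?_⟩
  obtain ⟨m₁⟩ := g₁
  obtain ⟨m₂⟩ := g₂
  have h := (Quotient.functor_map_eq_iff _ (m₁ ≫ f) (m₂ ≫ f)).mp hg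
  rw [wRel_iff, ObjectProperty.FullSubcategory.comp_hom, ObjectProperty.FullSubcategory.comp_hom,
    ← Preadditive.sub_comp] at h
  exact CategoryTheory.Quotient.sound _ ((wRel_iff _ _).mpr (hf _ h))

lemma epi_functor_map_of_factorsThrough {Y X : ObjectProperty.FullSubcategory P} (f : Y ⟶ X)
    (hf : ∀ {M : B} (c : X.obj ⟶ M), FactorsThrough Wp (f.hom ≫ c) → FactorsThrough Wp c) :
    Epi ((Quotient.functor (wRel Wp P)).map f) := by
  refine ⟨fun {Z} g₁ g₂ hg => ?_⟩
  obtain ⟨c₁⟩ := g₁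
  obtain ⟨c₂⟩ := g₂
  have h := (Quotient.functor_map_eq_iff _ (f ≫ c₁) (f ≫ c₂)).mp hg
  rw [wRel_iff, ObjectProperty.FullSubcategory.comp_hom, ObjectProperty.FullSubcategory.comp_hom,
    ← Preadditive.comp_sub] at h
  exact CategoryTheory.Quotient.sound _ ((wRel_iff _ _).mpr (hf _ h))

end

theorem stmt17_general {B : Type u} [Category.{v} B] [Preadditive B] [HasZeroObject B]
    [HasBinaryBiproducts B] (T : Extriangulated B) (S Tc U V : B → Prop)
    (h : IsTwinCotorsionPair T S Tc U V) (hTU : Tc = U) :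
    ∀ X : B, ∃ (Z Y : B) (g : Z ⟶ Y) (f : Y ⟶ X),
      CoConeOf T S S Y ∧ Wpred Tc U Z ∧ T.IsConflation g f ∧
      Mono ((Quotient.functor (wRel (Wpred Tc U) (fun _ : B => True))).map
        (show (⟨Y, trivial⟩ : ObjectProperty.FullSubcategory fun _ : B => True) ⟶ ⟨X, trivial⟩ from ObjectProperty.homMk f)) ∧
      Epi ((Quotient.functor (wRel (Wpred Tc U) (fun _ : B => True))).map
        (show (⟨Y, trivial⟩ : ObjectProperty.FullSubcategory fun _ : B => True) ⟶ ⟨X, trivial⟩ from ObjectProperty.homMk f)) := by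
  subst hTU
  have : Congruence (wRel (Wpred Tc Tc) fun _ : B => True) :=
    wRel_congruence _ _ ⟨h.1.subV.zero_mem, h.2.1.subU.zero_mem⟩
      (fun hx hy => ⟨h.1.subV.biprod_mem hx.1 hy.1, h.2.1.subU.biprod_mem hx.2 hy.2⟩)
  have mem_W : ∀ X, Tc X → Wpred Tc Tc X := fun _ hX => ⟨hX, hX⟩
  intro X
  obtain ⟨Z, Y, g, f, hY, hZ, hgf, hf⟩ := h.1.exists_conflation_coCone X
  refine ⟨Z, Y, g, f, hY, mem_W Z hZ, hgf, mono_functor_map_of_factorsThrough _ fun m hm => ?_,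
    epi_functor_map_of_factorsThrough _ fun c hc => ?_⟩
  · exact (h.2.1.factorsThrough_of_factorsThrough_comp_deflation hgf hZ m
      (hm.mono fun _ => And.left)).mono mem_W
  · exact (hf c (hc.mono fun _ => And.left)).mono mem_W

/-- For a twin cotorsion pair with `T = U`: every object `X` of `B` admits a conflation
`Z ↣ Y ↠ X` with `Y ∈ CoCone(S,S)`, `Z ∈ W`, and such that the image of the deflation
`Y ↠ X` in the heart `H̄ = B/[W]` is regular (both monic and epic). -/
theorem stmt17 {B : Type u} [Category.{v} B] [Preadditive B] [HasZeroObject B]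
    [HasBinaryBiproducts B] (T : Extriangulated B) (S Tc U V : B → Prop)
    (h : IsTwinCotorsionPair T S Tc U V) (hTU : Tc = U)
    (hproj : HasEnoughProj T) (hinj : HasEnoughInj T) :
    ∀ X : B, ∃ (Z Y : B) (g : Z ⟶ Y) (f : Y ⟶ X),
      CoConeOf T S S Y ∧ Wpred Tc U Z ∧ T.IsConflation g f ∧
      Mono ((Quotient.functor (wRel (Wpred Tc U) (fun _ : B => True))).map
        (show (⟨Y, trivial⟩ : ObjectProperty.FullSubcategory fun _ : B => True) ⟶ ⟨X, trivial⟩ from ObjectProperty.homMk f)) ∧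
      Epi ((Quotient.functor (wRel (Wpred Tc U) (fun _ : B => True))).map
        (show (⟨Y, trivial⟩ : ObjectProperty.FullSubcategory fun _ : B => True) ⟶ ⟨X, trivial⟩ from ObjectProperty.homMk f)) :=
  stmt17_general T S Tc U V h hTU
end ExtStmt
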